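/- arXiv:2410.21821 — 4 statements merged into one kernel-verified Lean document; each statement's English description precedes it below -/
import Mathlib

section
/- (Barbalat's lemma) If f : [0,∞) → ℝ is uniformly continuous and the improper integral ∫₀^∞ f(σ) dσ exists and is finite, then f(t) → 0 as t → ∞. -/
open Filter MeasureTheory intervalIntegral
open scoped Topology

/-!
If `∫₀^t f` converges, the integrals of `f` over windows `[t, t + c]` of fixed length tend to
`0`. Uniform continuity makes `f` nearly constant on a short enough window, so `c * |f t|` is at
most the window integral plus `c * ε / 2`, which is eventually below `c * ε`.
-/

variable {E : Type*} [NormedAddCommGroup E] [NormedSpace ℝ E]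

theorem Filter.Tendsto.tendsto_intervalIntegral_self_add {f : ℝ → E} {a : ℝ} {L : E}
    (hf : ∀ b, a ≤ b → IntervalIntegrable f volume a b)
    (hL : Tendsto (fun t => ∫ x in a..t, f x) atTop (𝓝 L)) (c : ℝ) :
    Tendsto (fun t => ∫ x in t..t + c, f x) atTop (𝓝 0) := by
  have hdiff :
      Tendsto (fun t => (∫ x in a..t + c, f x) - ∫ x in a..t, f x) atTop (𝓝 (L - L)) :=
    (hL.comp (tendsto_atTop_add_const_right _ c tendsto_id)).sub hL
  rw [sub_self] at hdiff
  refine hdiff.congr' ?_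
  filter_upwards [eventually_ge_atTop a, eventually_ge_atTop (a - c)] with t hat hact
  exact integral_interval_sub_left (hf _ (by linarith)) (hf t hat)

theorem mul_norm_le_norm_intervalIntegral_add [CompleteSpace E] {f : ℝ → E} {t c η : ℝ}
    (hc : 0 ≤ c) (hf : IntervalIntegrable f volume t (t + c))
    (hη : ∀ s ∈ Set.Icc t (t + c), ‖f s - f t‖ ≤ η) :
    c * ‖f t‖ ≤ ‖∫ s in t..t + c, f s‖ + c * η := by
  have hdev : ‖∫ s in t..t + c, (f s - f t)‖ ≤ c * η := by
    have := norm_integral_le_of_norm_le_const (a := t) (b := t + c) (C := η) fun s hs => by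
      rw [Set.uIoc_of_le (by linarith)] at hs
      exact hη s (Set.Ioc_subset_Icc_self hs)
    rwa [add_sub_cancel_left, abs_of_nonneg hc, mul_comm] at this
  have hsplit : ∫ s in t..t + c, (f s - f t) = (∫ s in t..t + c, f s) - c • f t := by
    rw [integral_sub hf intervalIntegrable_const, intervalIntegral.integral_const,
      add_sub_cancel_left]
  calc c * ‖f t‖ = ‖c • f t‖ := by rw [norm_smul, Real.norm_of_nonneg hc]
    _ = ‖(∫ s in t..t + c, f s) - ∫ s in t..t + c, (f s - f t)‖ := by
      rw [hsplit, sub_sub_cancel]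
    _ ≤ ‖∫ s in t..t + c, f s‖ + ‖∫ s in t..t + c, (f s - f t)‖ := norm_sub_le _ _
    _ ≤ ‖∫ s in t..t + c, f s‖ + c * η := by gcongr

/-- Barbalat's lemma: if `f` is uniformly continuous on `[0,∞)` and the improper
integral `∫₀^∞ f` exists (the integrals `∫₀^t f` converge to a finite limit `L`
as `t → ∞`), then `f t → 0` as `t → ∞`. -/
theorem barbalat (f : ℝ → ℝ) (hf : UniformContinuousOn f (Set.Ici 0))
    (L : ℝ)
    (hL : Tendsto (fun t => ∫ σ in (0:ℝ)..t, f σ) atTop (𝓝 L)) :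
    Tendsto f atTop (𝓝 0) := by
  have hintegrable : ∀ a b, 0 ≤ a → a ≤ b → IntervalIntegrable f volume a b := fun a b ha hab =>
    (hf.continuousOn.mono (Set.Icc_subset_Ici_self.trans (Set.Ici_subset_Ici.2 ha))
      |>.intervalIntegrable_of_Icc hab)
  refine Metric.tendsto_nhds.2 fun ε hε => ?_
  obtain ⟨δ, hδ, hfδ⟩ := Metric.uniformContinuousOn_iff_le.1 hf (ε / 2) (by positivity)
  have hwindow := (hL.tendsto_intervalIntegral_self_add (hintegrable 0 · le_rfl) δ).eventually
    (Metric.ball_mem_nhds 0 (by positivity : 0 < δ * (ε / 2)))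
  filter_upwards [eventually_ge_atTop 0, hwindow] with t ht hsmall
  have hnear : ∀ s ∈ Set.Icc t (t + δ), ‖f s - f t‖ ≤ ε / 2 := fun s hs =>
    hfδ s (ht.trans hs.1) t ht (by rw [Real.dist_eq, abs_of_nonneg] <;> linarith [hs.1, hs.2])
  have hbound := mul_norm_le_norm_intervalIntegral_add hδ.le (hintegrable t _ ht (by linarith)) hnear
  rw [dist_zero_right] at hsmall
  rw [Real.dist_eq, sub_zero, ← Real.norm_eq_abs]
  exact lt_of_mul_lt_mul_left (by linarith) hδ.le
end

section
/- Let X be the fundamental matrix of the linear delay system x'(t) = A₀ x(t) + Σ_{j=1}^m A_j x(t-τ_j). If the matrix A₀ + Σ_j A_j is invertible and ∫₀^∞ X(σ) dσ = -(A₀ + Σ_j A_j)^{-1}, then X(t) → 0 as t → ∞. -/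
open Filter Set MeasureTheory intervalIntegral
open scoped Topology

attribute [local instance] Matrix.frobeniusNormedAddCommGroup Matrix.frobeniusNormedSpace

/-!
Integrating the delay equation from `0` to `t`, and using that `X` vanishes before time `0`,
gives `X t = I + A₀ ∫₀ᵗ X + ∑ⱼ Aⱼ ∫₀^{t-τⱼ} X`. As `t → ∞` every integral tends to
`-(A₀ + ∑ⱼ Aⱼ)⁻¹`, so `X t → I - (A₀ + ∑ⱼ Aⱼ)(A₀ + ∑ⱼ Aⱼ)⁻¹ = 0`.
-/

theorem MeasureTheory.LocallyIntegrable.intervalIntegrable {E : Type*} [NormedAddCommGroup E]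
    {f : ℝ → E} {μ : Measure ℝ} (hf : LocallyIntegrable f μ) (a b : ℝ) :
    IntervalIntegrable f μ a b :=
  (hf.integrableOn_isCompact isCompact_uIcc).intervalIntegrable

theorem ContinuousLinearMap.intervalIntegrable_comp {E F : Type*} [NormedAddCommGroup E]
    [NormedSpace ℝ E] [NormedAddCommGroup F] [NormedSpace ℝ F] (L : E →L[ℝ] F) {f : ℝ → E}
    {μ : Measure ℝ} {a b : ℝ} (hf : IntervalIntegrable f μ a b) :
    IntervalIntegrable (fun s => L (f s)) μ a b :=
  intervalIntegrable_iff.2 (L.integrable_comp (intervalIntegrable_iff.1 hf))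

section DelayEquation

variable {E : Type*} [NormedAddCommGroup E] {x : ℝ → E}

theorem locallyIntegrable_of_continuousOn_Ici_of_eq_zero {μ : Measure ℝ}
    [IsLocallyFiniteMeasure μ] (hzero : ∀ t < 0, x t = 0) (hcont : ContinuousOn x (Ici 0)) :
    LocallyIntegrable x μ := by
  have hind : (Ici 0).indicator x = x :=
    indicator_eq_self.2 fun t ht => not_lt.1 fun hneg => ht (hzero t hneg)
  rw [locallyIntegrable_iff]
  intro K hK
  rw [← hind, IntegrableOn, integrable_indicator_iff measurableSet_Ici, IntegrableOn,
    Measure.restrict_restrict measurableSet_Ici]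
  exact (hcont.mono inter_subset_left).integrableOn_compact (hK.inter_left isClosed_Ici)

variable [NormedSpace ℝ E]

theorem intervalIntegral_comp_sub_of_eq_zero (hzero : ∀ t < 0, x t = 0)
    (hx : LocallyIntegrable x) {τ : ℝ} (hτ : 0 ≤ τ) (t : ℝ) :
    ∫ s in (0:ℝ)..t, x (s - τ) = ∫ s in (0:ℝ)..(t - τ), x s := by
  have hnull : ∫ s in -τ..0, x s = 0 := by
    rw [integral_of_le (neg_nonpos.2 hτ), integral_Ioc_eq_integral_Ioo]
    exact setIntegral_eq_zero_of_forall_eq_zero fun s hs => hzero s hs.2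
  rw [integral_comp_sub_right, zero_sub, ← integral_add_adjacent_intervals
    (hx.intervalIntegrable _ 0) (hx.intervalIntegrable 0 _), hnull, zero_add]

variable [CompleteSpace E] {ι : Type*} [Fintype ι] (A₀ : E →L[ℝ] E) (A : ι → E →L[ℝ] E)
  {τ : ι → ℝ}

theorem eq_add_integral_of_hasDerivAt_delay (hτ : ∀ j, 0 ≤ τ j) (hzero : ∀ t < 0, x t = 0)
    (hcont : ContinuousOn x (Ici 0))
    (hderiv : ∀ t > 0, HasDerivAt x (A₀ (x t) + ∑ j, A j (x (t - τ j))) t) {t : ℝ}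
    (ht : 0 ≤ t) :
    x t = x 0 + A₀ (∫ s in (0:ℝ)..t, x s) + ∑ j, A j (∫ s in (0:ℝ)..(t - τ j), x s) := by
  have hx : LocallyIntegrable x := locallyIntegrable_of_continuousOn_Ici_of_eq_zero hzero hcont
  have hxt : IntervalIntegrable x volume 0 t := hx.intervalIntegrable 0 t
  have hlagged (j : ι) : IntervalIntegrable (fun s => x (s - τ j)) volume 0 t := by
    simpa using (hx.intervalIntegrable (-τ j) (t - τ j)).comp_sub_right (τ j)
  have hsum : IntervalIntegrable (fun s => ∑ j, A j (x (s - τ j))) volume 0 t := by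
    simpa only [Finset.sum_fn] using
      IntervalIntegrable.sum Finset.univ fun j _ => (A j).intervalIntegrable_comp (hlagged j)
  have hftc := integral_eq_sub_of_hasDerivAt_of_le ht (hcont.mono Icc_subset_Ici_self)
    (fun s hs => hderiv s hs.1) ((A₀.intervalIntegrable_comp hxt).add hsum)
  have hlagged_integral (j : ι) :
      ∫ s in (0:ℝ)..t, A j (x (s - τ j)) = A j (∫ s in (0:ℝ)..(t - τ j), x s) := by
    rw [(A j).intervalIntegral_comp_comm (hlagged j),
      intervalIntegral_comp_sub_of_eq_zero hzero hx (hτ j)]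
  rw [integral_add (A₀.intervalIntegrable_comp hxt) hsum,
    integral_finsetSum fun j _ => (A j).intervalIntegrable_comp (hlagged j),
    A₀.intervalIntegral_comp_comm hxt] at hftc
  simp only [hlagged_integral] at hftc
  rw [add_assoc, hftc, add_sub_cancel]

theorem tendsto_of_tendsto_integral_delay (hτ : ∀ j, 0 ≤ τ j) (hzero : ∀ t < 0, x t = 0)
    (hcont : ContinuousOn x (Ici 0))
    (hderiv : ∀ t > 0, HasDerivAt x (A₀ (x t) + ∑ j, A j (x (t - τ j))) t) {L : E}
    (hL : Tendsto (fun t => ∫ s in (0:ℝ)..t, x s) atTop (𝓝 L)) :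
    Tendsto x atTop (𝓝 (x 0 + A₀ L + ∑ j, A j L)) := by
  have hlagged (j : ι) : Tendsto (fun t => ∫ s in (0:ℝ)..(t - τ j), x s) atTop (𝓝 L) :=
    hL.comp (tendsto_atTop_add_const_right atTop (-τ j) tendsto_id)
  refine Tendsto.congr' ?_ ((tendsto_const_nhds.add ((A₀.continuous.tendsto L).comp hL)).add
    (tendsto_finsetSum _ fun j _ => ((A j).continuous.tendsto L).comp (hlagged j)))
  filter_upwards [eventually_ge_atTop 0] with t ht
  exact (eq_add_integral_of_hasDerivAt_delay A₀ A hτ hzero hcont hderiv ht).symm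

end DelayEquation

/-- Sufficiency direction of Theorem 1: if `A₀ + ∑ j, A j` is invertible and the
improper integral of the fundamental matrix equals `-(A₀ + ∑ j, A j)⁻¹`, then the
fundamental matrix tends to `0`, i.e. the delay system is asymptotically stable. -/
theorem tendsto_zero_of_integral_eq_neg_inv (n m : ℕ)
    (A₀ : Matrix (Fin n) (Fin n) ℝ) (A : Fin m → Matrix (Fin n) (Fin n) ℝ)
    (τ : Fin m → ℝ) (hτ : ∀ j, 0 < τ j)
    (X X' : ℝ → Matrix (Fin n) (Fin n) ℝ)
    (hzero : ∀ t < (0:ℝ), X t = 0) (hinit : X 0 = 1)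
    (hcont : ContinuousOn X (Ici 0))
    (hderiv : ∀ t ∈ Ici (0:ℝ), X' t = A₀ * X t + ∑ j, A j * X (t - τ j))
    (hderiv' : ∀ t ∈ Ioi (0:ℝ), HasDerivAt X (X' t) t)
    (hU : IsUnit (A₀ + ∑ j, A j))
    (hlim : Tendsto (fun t => ∫ σ in (0:ℝ)..t, X σ) atTop (𝓝 (-(A₀ + ∑ j, A j)⁻¹))) :
    Tendsto X atTop (𝓝 0) := by
  set S := A₀ + ∑ j, A j
  let mulLeft (B : Matrix (Fin n) (Fin n) ℝ) :
      Matrix (Fin n) (Fin n) ℝ →L[ℝ] Matrix (Fin n) (Fin n) ℝ :=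
    (LinearMap.mulLeft ℝ B).toContinuousLinearMap
  have hX : Tendsto X atTop (𝓝 (X 0 + A₀ * -S⁻¹ + ∑ j, A j * -S⁻¹)) :=
    tendsto_of_tendsto_integral_delay (mulLeft A₀) (fun j => mulLeft (A j))
      (fun j => (hτ j).le) hzero hcont (fun t ht => hderiv t (mem_Ici.2 ht.le) ▸ hderiv' t ht) hlim
  have hinv : S * S⁻¹ = 1 := Matrix.mul_nonsing_inv S ((Matrix.isUnit_iff_isUnit_det S).1 hU)
  rwa [hinit, add_assoc, ← Finset.sum_mul, ← add_mul, mul_neg, hinv, add_neg_cancel] at hX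
end

section
/- Let X be the fundamental matrix of the delay system. If ∫₀^∞ ‖X(σ)‖_F² dσ exists and is finite, then each entry X_{ij}(t) is bounded on [0,∞). More precisely, for all t ≥ 0, |X_{ij}(t)² - X_{ij}(0)²| ≤ 2 Σ_k (|a_{ik}| + Σ_l |a_{ik}^{(l)}|)(∫₀^∞ X_{ij}(σ)² dσ + ∫₀^∞ X_{kj}(σ)² dσ), where A₀ = (a_{ik}) and A_l = (a_{ik}^{(l)}). -/
open Filter Set MeasureTheory
open scoped Topology

/-!
The derivative `2 Xᵢⱼ (A₀X + ∑ₗ AₗX(· - τₗ))ᵢⱼ` of `Xᵢⱼ²` is dominated, via `2|ab| ≤ a² + b²`,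
by a nonnegative combination of squared entries of `X`, some of them delayed. Its integral over
`[0, t]` is at most its integral over `ℝ`, where translation invariance removes the delays; as `X`
vanishes on `(-∞, 0)`, what remains are the square integrals of the entries over `[0, ∞)`.
-/

open Finset in
theorem abs_two_mul_sum_mul_le {ι : Type*} (s : Finset ι) (x : ℝ) (c y : ι → ℝ) :
    |2 * x * ∑ p ∈ s, c p * y p| ≤ ∑ p ∈ s, |c p| * (x ^ 2 + y p ^ 2) := by
  rw [mul_sum]
  refine (abs_sum_le_sum_abs _ _).trans (sum_le_sum fun p _ => ?_)
  calc |2 * x * (c p * y p)| = |c p| * |2 * x * y p| := by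
        simp only [abs_mul, abs_two]; ring
    _ ≤ |c p| * (x ^ 2 + y p ^ 2) := by
        gcongr
        exact abs_le.2 ⟨by nlinarith [sq_nonneg (x + y p)], two_mul_le_add_sq _ _⟩

theorem abs_sub_le_integral_of_hasDerivAt {φ φ' h : ℝ → ℝ} {a b : ℝ} (hab : a ≤ b)
    (hcont : ContinuousOn φ (Icc a b)) (hderiv : ∀ x ∈ Ioo a b, HasDerivAt φ (φ' x) x)
    (hint : IntegrableOn h (Icc a b)) (hbound : ∀ x ∈ Ioo a b, |φ' x| ≤ h x) :
    |φ b - φ a| ≤ ∫ x in a..b, h x := by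
  have hup := intervalIntegral.sub_le_integral_of_hasDeriv_right_of_le hab hcont
    (fun x hx => (hderiv x hx).hasDerivWithinAt) hint
    fun x hx => (le_abs_self _).trans (hbound x hx)
  have hdown := intervalIntegral.sub_le_integral_of_hasDeriv_right_of_le hab hcont.fun_neg
    (fun x hx => (hderiv x hx).neg.hasDerivWithinAt) hint
    fun x hx => (neg_le_abs _).trans (hbound x hx)
  exact abs_sub_le_iff.2 ⟨hup, by linarith⟩

open Matrix in
theorem sq_sub_sq_le_of_hasDerivAt_delay {ι L : Type*} [Fintype ι] [Fintype L]
    {x : ℝ → ι → ℝ} {B : L → Matrix ι ι ℝ} {δ : L → ℝ} {i : ι}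
    (hcont : ContinuousOn (fun s => x s i) (Ici 0))
    (hderiv : ∀ s > 0, HasDerivAt (fun s => x s i) (∑ l, (B l *ᵥ x (s - δ l)) i) s)
    (hint : ∀ k, Integrable fun s => x s k ^ 2) {t : ℝ} (ht : 0 ≤ t) :
    |x t i ^ 2 - x 0 i ^ 2| ≤
      ∑ l, ∑ k, |B l i k| * ((∫ s, x s i ^ 2) + ∫ s, x s k ^ 2) := by
  set h : ℝ → ℝ := fun s => ∑ l, ∑ k, |B l i k| * (x s i ^ 2 + x (s - δ l) k ^ 2)
  have hterm : ∀ l k, Integrable fun s => |B l i k| * (x s i ^ 2 + x (s - δ l) k ^ 2) :=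
    fun l k => ((hint i).add ((hint k).comp_sub_right (δ l))).const_mul _
  have h_int : Integrable h :=
    integrable_finsetSum _ fun l _ => integrable_finsetSum _ fun k _ => hterm l k
  have h_integral : ∫ s, h s = ∑ l, ∑ k, |B l i k| * ((∫ s, x s i ^ 2) + ∫ s, x s k ^ 2) := by
    rw [integral_finsetSum _ fun l _ => integrable_finsetSum _ fun k _ => hterm l k]
    refine Finset.sum_congr rfl fun l _ => ?_
    rw [integral_finsetSum _ fun k _ => hterm l k]
    refine Finset.sum_congr rfl fun k _ => ?_
    rw [integral_const_mul, integral_add (hint i) ((hint k).comp_sub_right (δ l)),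
      integral_sub_right_eq_self (fun s => x s k ^ 2)]
  have hbound : ∀ s, |2 * x s i * ∑ l, (B l *ᵥ x (s - δ l)) i| ≤ h s := by
    intro s
    simp only [h, mulVec, dotProduct, ← Fintype.sum_prod_type']
    exact abs_two_mul_sum_mul_le _ _ _ _
  calc |x t i ^ 2 - x 0 i ^ 2| ≤ ∫ s in 0..t, h s :=
        abs_sub_le_integral_of_hasDerivAt (φ := fun s => x s i ^ 2) ht
          ((hcont.mono Icc_subset_Ici_self).pow 2)
          (fun s hs => by simpa using (hderiv s hs.1).fun_pow 2) h_int.integrableOn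
          fun s _ => hbound s
    _ ≤ ∫ s, h s := by
        rw [intervalIntegral.integral_of_le ht]
        exact setIntegral_le_integral h_int (ae_of_all _ fun s => by positivity)
    _ = _ := h_integral

theorem integrable_sq_apply_of_integrableOn_sum_sq {ι κ : Type*} [Fintype ι] [Fintype κ]
    {X : ℝ → Matrix ι κ ℝ} {i : ι} {j : κ} (hzero : ∀ t < 0, X t = 0)
    (hcont : ContinuousOn (fun t => X t i j) (Ici 0))
    (hint : IntegrableOn (fun σ => ∑ i, ∑ j, X σ i j ^ 2) (Ici 0)) :
    Integrable fun σ => X σ i j ^ 2 := by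
  refine IntegrableOn.integrable_of_forall_notMem_eq_zero (s := Ici 0) ?_
    fun σ hσ => by simp [hzero σ (not_le.1 hσ)]
  refine hint.mono' ((hcont.pow 2).aestronglyMeasurable measurableSet_Ici)
    (ae_of_all _ fun σ => ?_)
  rw [Real.norm_of_nonneg (sq_nonneg _)]
  exact (Finset.single_le_sum (f := fun b => X σ i b ^ 2) (fun b _ => sq_nonneg _)
    (Finset.mem_univ j)).trans (Finset.single_le_sum (f := fun a => ∑ b, X σ a b ^ 2)
      (fun a _ => Finset.sum_nonneg fun b _ => sq_nonneg _) (Finset.mem_univ i))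

open Matrix in
theorem sq_apply_sub_sq_le_of_matrix_delay {ι κ : Type*} [Fintype ι] [Fintype κ]
    {A₀ : Matrix ι ι ℝ} {A : κ → Matrix ι ι ℝ} {τ : κ → ℝ} {X X' : ℝ → Matrix ι ι ℝ}
    {i j : ι} (hcont : ContinuousOn (fun t => X t i j) (Ici 0))
    (hderiv : ∀ t ∈ Ici (0:ℝ), X' t = A₀ * X t + ∑ l, A l * X (t - τ l))
    (hderiv' : ∀ t ∈ Ioi (0:ℝ), HasDerivAt (fun s => X s i j) (X' t i j) t)
    (hint : ∀ k, Integrable fun σ => X σ k j ^ 2) {t : ℝ} (ht : 0 ≤ t) :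
    |X t i j ^ 2 - X 0 i j ^ 2| ≤
      ∑ k, (|A₀ i k| + ∑ l, |A l i k|) * ((∫ σ, X σ i j ^ 2) + ∫ σ, X σ k j ^ 2) := by
  -- `none` encodes the undelayed term `A₀X`
  have hsystem : ∀ s > 0, HasDerivAt (fun s => X s i j)
      (∑ o : Option κ, (o.elim A₀ A *ᵥ fun k => X (s - o.elim 0 τ) k j) i) s := by
    intro s hs
    convert hderiv' s hs using 1
    simp [hderiv s hs.le, Fintype.sum_option, Matrix.mul_apply, Matrix.mulVec,
      dotProduct, Matrix.sum_apply]
  convert sq_sub_sq_le_of_hasDerivAt_delay (x := fun s k => X s k j) hcont hsystem hint ht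
    using 1
  simp [Fintype.sum_option, Finset.sum_comm (γ := κ), add_mul, Finset.sum_mul,
    Finset.sum_add_distrib]

theorem entry_sq_bound_of_l2_general (n m : ℕ)
    (A₀ : Matrix (Fin n) (Fin n) ℝ) (A : Fin m → Matrix (Fin n) (Fin n) ℝ)
    (τ : Fin m → ℝ)
    (X X' : ℝ → Matrix (Fin n) (Fin n) ℝ)
    (hzero : ∀ t < (0:ℝ), X t = 0)
    (hcont : ∀ i j, ContinuousOn (fun t => X t i j) (Ici 0))
    (hderiv : ∀ t ∈ Ici (0:ℝ), X' t = A₀ * X t + ∑ l, A l * X (t - τ l))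
    (hderiv' : ∀ i j, ∀ t ∈ Ioi (0:ℝ), HasDerivAt (fun s => X s i j) (X' t i j) t)
    (hint : IntegrableOn (fun σ => ∑ i, ∑ j, X σ i j ^ 2) (Ici 0)) :
    (∀ i j, ∀ t ∈ Ici (0:ℝ),
      |X t i j ^ 2 - X 0 i j ^ 2| ≤
        2 * ∑ k, (|A₀ i k| + ∑ l, |A l i k|) *
          ((∫ σ in Ici (0:ℝ), X σ i j ^ 2) + ∫ σ in Ici (0:ℝ), X σ k j ^ 2)) ∧
    ∀ i j, ∃ C, ∀ t ∈ Ici (0:ℝ), |X t i j| ≤ C := by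
  have hsq (k j) : Integrable fun σ => X σ k j ^ 2 :=
    integrable_sq_apply_of_integrableOn_sum_sq hzero (hcont k j) hint
  have hIci (k j) : ∫ σ in Ici (0:ℝ), X σ k j ^ 2 = ∫ σ, X σ k j ^ 2 :=
    setIntegral_eq_integral_of_forall_compl_eq_zero fun σ hσ => by
      simp [hzero σ (not_le.1 hσ)]
  have hbound (i j) (t : ℝ) (ht : t ∈ Ici 0) :
      |X t i j ^ 2 - X 0 i j ^ 2| ≤ ∑ k, (|A₀ i k| + ∑ l, |A l i k|) *
        ((∫ σ in Ici (0:ℝ), X σ i j ^ 2) + ∫ σ in Ici (0:ℝ), X σ k j ^ 2) := by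
    simpa only [hIci] using sq_apply_sub_sq_le_of_matrix_delay (hcont i j) hderiv
      (hderiv' i j) (fun k => hsq k j) ht
  refine ⟨fun i j t ht =>
    (hbound i j t ht).trans (le_mul_of_one_le_left (by positivity) one_le_two), fun i j => ?_⟩
  obtain ⟨C, hC⟩ : ∃ C, ∀ t ∈ Ici (0:ℝ), |X t i j ^ 2 - X 0 i j ^ 2| ≤ C := ⟨_, hbound i j⟩
  exact ⟨√(X 0 i j ^ 2 + C), fun t ht =>
    Real.abs_le_sqrt (by linarith [le_abs_self (X t i j ^ 2 - X 0 i j ^ 2), hC t ht])⟩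

/-- If `∫₀^∞ ‖X(σ)‖_F² dσ` is finite (here expressed entrywise as integrability of
`∑ i j, X(σ)ᵢⱼ²`), then each entry of the fundamental matrix satisfies the bound
`|Xᵢⱼ(t)² - Xᵢⱼ(0)²| ≤ 2 ∑ₖ (|a_{ik}| + ∑ₗ |a_{ik}^{(l)}|)(∫₀^∞ Xᵢⱼ² + ∫₀^∞ X_{kj}²)`,
so each entry is bounded on `[0,∞)`. -/
theorem entry_sq_bound_of_l2 (n m : ℕ)
    (A₀ : Matrix (Fin n) (Fin n) ℝ) (A : Fin m → Matrix (Fin n) (Fin n) ℝ)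
    (τ : Fin m → ℝ) (hτ : ∀ l, 0 < τ l)
    (X X' : ℝ → Matrix (Fin n) (Fin n) ℝ)
    (hzero : ∀ t < (0:ℝ), X t = 0) (hinit : X 0 = 1)
    (hcont : ∀ i j, ContinuousOn (fun t => X t i j) (Ici 0))
    (hderiv : ∀ t ∈ Ici (0:ℝ), X' t = A₀ * X t + ∑ l, A l * X (t - τ l))
    (hderiv' : ∀ i j, ∀ t ∈ Ioi (0:ℝ), HasDerivAt (fun s => X s i j) (X' t i j) t)
    (hint : IntegrableOn (fun σ => ∑ i, ∑ j, X σ i j ^ 2) (Ici 0)) :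
    (∀ i j, ∀ t ∈ Ici (0:ℝ),
      |X t i j ^ 2 - X 0 i j ^ 2| ≤
        2 * ∑ k, (|A₀ i k| + ∑ l, |A l i k|) *
          ((∫ σ in Ici (0:ℝ), X σ i j ^ 2) + ∫ σ in Ici (0:ℝ), X σ k j ^ 2)) ∧
    ∀ i j, ∃ C, ∀ t ∈ Ici (0:ℝ), |X t i j| ≤ C :=
  entry_sq_bound_of_l2_general n m A₀ A τ X X' hzero hcont hderiv hderiv' hint
end

section
/- Let X be the fundamental matrix of the delay system x'(t)=A₀x(t)+Σ_j A_j x(t-τ_j). If ∫₀^∞ ‖X(σ)‖_F² dσ is finite, then ‖X(t)‖_F → 0 as t → ∞. -/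
open Filter Set MeasureTheory
open scoped Topology

attribute [local instance] Matrix.frobeniusNormedAddCommGroup Matrix.frobeniusNormedSpace

lemma barbalat_aux (g : ℝ → ℝ) (K : ℝ) (hK : 0 < K)
    (hnn : ∀ t, 0 ≤ g t)
    (hlip : ∀ s ∈ Ici (0:ℝ), ∀ t ∈ Ici (0:ℝ), |g t - g s| ≤ K * |t - s|)
    (hgint : IntegrableOn g (Ici 0)) :
    Tendsto g atTop (𝓝 0) := by
  rw [Metric.tendsto_atTop]
  by_contra hcon
  push_neg at hcon
  obtain ⟨ε, hε, hcon⟩ := hcon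
  choose u hu hgu using fun k : ℕ => hcon k
  have hunn : ∀ k : ℕ, (0:ℝ) ≤ u k := fun k => le_trans (Nat.cast_nonneg k) (hu k)
  have hgu' : ∀ k, ε ≤ g (u k) := by
    intro k
    have := hgu k
    rwa [Real.dist_eq, sub_zero, abs_of_nonneg (hnn _)] at this
  set δ := ε / (2 * K) with hδ
  have hδpos : 0 < δ := div_pos hε (by positivity)
  have hKδ : K * δ = ε / 2 := by
    rw [hδ]; field_simp
  have int2 : ∀ k : ℕ, IntervalIntegrable g volume (u k) (u k + δ) := by
    intro k
    refine (hgint.mono_set ?_).intervalIntegrable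
    rw [uIcc_of_le (by linarith [hunn k, hδpos])]
    exact fun x hx => le_trans (hunn k) hx.1
  have int1 : ∀ k : ℕ, IntervalIntegrable g volume 0 (u k) := by
    intro k
    refine (hgint.mono_set ?_).intervalIntegrable
    rw [uIcc_of_le (hunn k)]
    exact Icc_subset_Ici_self
  have key : ∀ k : ℕ, δ * (ε/2) ≤ ∫ s in (u k)..(u k + δ), g s := by
    intro k
    have h1 : ∀ s ∈ Icc (u k) (u k + δ), ε/2 ≤ g s := by
      intro s hs
      have h2 := hlip (u k) (hunn k) s (le_trans (hunn k) hs.1)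
      have h3 : |g s - g (u k)| ≤ ε / 2 := by
        rw [← hKδ]
        refine le_trans h2 ?_
        have habs : |s - u k| ≤ δ := by
          rw [abs_of_nonneg (by linarith [hs.1])]
          linarith [hs.2]
        nlinarith
      have h4 := (abs_le.1 h3).1
      linarith [hgu' k]
    calc δ * (ε/2) = ∫ _ in (u k)..(u k + δ), (ε/2 : ℝ) := by
          rw [intervalIntegral.integral_const, smul_eq_mul]; ring
      _ ≤ ∫ s in (u k)..(u k + δ), g s := by
          apply intervalIntegral.integral_mono_on (by linarith [hδpos]) intervalIntegrable_const (int2 k) h1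
  have hIoi : IntegrableOn g (Ioi 0) := hgint.mono_set Ioi_subset_Ici_self
  have hu_tendsto : Tendsto u atTop atTop :=
    tendsto_atTop_mono hu tendsto_natCast_atTop_atTop
  have h1 := MeasureTheory.intervalIntegral_tendsto_integral_Ioi 0 hIoi hu_tendsto
  have h2 := MeasureTheory.intervalIntegral_tendsto_integral_Ioi 0 hIoi
    (tendsto_atTop_add_const_right atTop δ hu_tendsto)
  have h3 : Tendsto (fun k => (∫ s in (0:ℝ)..(u k + δ), g s) - ∫ s in (0:ℝ)..(u k), g s)
      atTop (𝓝 0) := by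
    simpa using h2.sub h1
  have h4 : (0:ℝ) ≥ δ * (ε/2) := by
    refine ge_of_tendsto h3 (Eventually.of_forall fun k => ?_)
    have := intervalIntegral.integral_add_adjacent_intervals (int1 k) (int2 k)
    have heq : (∫ s in (0:ℝ)..(u k + δ), g s) - ∫ s in (0:ℝ)..(u k), g s
        = ∫ s in (u k)..(u k + δ), g s := by rw [← this]; ring
    rw [heq]
    exact key k
  nlinarith

set_option maxHeartbeats 1600000 in
/-- Sufficiency direction of Theorem 3: if `∫₀^∞ ‖X(σ)‖_F² dσ` exists and is finite for
the fundamental matrix `X` of the delay system, then `‖X t‖_F → 0` as `t → ∞`. -/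
theorem tendsto_zero_of_frobenius_sq_integrable (n m : ℕ)
    (A₀ : Matrix (Fin n) (Fin n) ℝ) (A : Fin m → Matrix (Fin n) (Fin n) ℝ)
    (τ : Fin m → ℝ) (hτ : ∀ j, 0 < τ j)
    (X X' : ℝ → Matrix (Fin n) (Fin n) ℝ)
    (hzero : ∀ t < (0:ℝ), X t = 0) (hinit : X 0 = 1)
    (hcont : ContinuousOn X (Ici 0))
    (hderiv : ∀ t ∈ Ici (0:ℝ), X' t = A₀ * X t + ∑ j, A j * X (t - τ j))
    (hderiv' : ∀ t ∈ Ioi (0:ℝ), HasDerivAt X (X' t) t)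
    (hint : IntegrableOn (fun σ => ‖X σ‖ ^ 2) (Ici 0)) :
    Tendsto (fun t => ‖X t‖) atTop (𝓝 0) := by
  classical
  letI : TopologicalSpace.PseudoMetrizableSpace (Matrix (Fin n) (Fin n) ℝ) :=
    inferInstanceAs (TopologicalSpace.PseudoMetrizableSpace (Fin n → Fin n → ℝ))
  letI : ContinuousENorm (Matrix (Fin n) (Fin n) ℝ) := SeminormedAddGroup.toContinuousENorm
  set g : ℝ → ℝ := fun t => ‖X t‖^2 with hgdef
  have hgnn : ∀ t, 0 ≤ g t := fun t => sq_nonneg _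
  have hXind : X = (Ici (0:ℝ)).indicator X := by
    funext t
    by_cases ht : (0:ℝ) ≤ t
    · rw [indicator_of_mem (mem_Ici.2 ht)]
    · rw [indicator_of_notMem (by simpa using ht), hzero t (lt_of_not_ge ht)]
  have hXmeas : AEStronglyMeasurable X (volume : Measure ℝ) := by
    rw [hXind]
    exact (aestronglyMeasurable_indicator_iff measurableSet_Ici).2
      (hcont.aestronglyMeasurable measurableSet_Ici)
  have hXshift : ∀ c : ℝ, AEStronglyMeasurable (fun s => X (s - c)) (volume : Measure ℝ) :=
    fun c => hXmeas.comp_quasiMeasurePreserving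
      (measurePreserving_sub_right volume c).quasiMeasurePreserving
  have hloc : ∀ d : ℝ, ∃ C : ℝ, 0 ≤ C ∧ ∀ s ≤ d, ‖X s‖ ≤ C := by
    intro d
    rcases le_or_gt 0 d with hd | hd
    · obtain ⟨C, hC⟩ := (isCompact_Icc (a := (0:ℝ)) (b := d)).exists_bound_of_continuousOn
        (hcont.mono Icc_subset_Ici_self)
      refine ⟨max C 0, le_max_right _ _, fun s hs => ?_⟩
      rcases lt_or_ge s 0 with h | h
      · rw [hzero s h]; simp
      · exact le_trans (hC s ⟨h, hs⟩) (le_max_left _ _)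
    · refine ⟨0, le_refl _, fun s hs => ?_⟩
      rw [hzero s (lt_of_le_of_lt hs hd)]; simp
  have hXint : ∀ a b : ℝ, IntegrableOn X (Icc a b) := by
    intro a b
    obtain ⟨C, _, hC⟩ := hloc b
    refine Integrable.mono' (integrable_const C) hXmeas.restrict ?_
    exact (ae_restrict_iff' measurableSet_Icc).2 (Eventually.of_forall fun s hs => hC s hs.2)
  have hXintshift : ∀ c a b : ℝ, IntegrableOn (fun s => X (s - c)) (Icc a b) := by
    intro c a b
    obtain ⟨C, _, hC⟩ := hloc (b - c)
    refine Integrable.mono' (integrable_const C) (hXshift c).restrict ?_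
    exact (ae_restrict_iff' measurableSet_Icc).2
      (Eventually.of_forall fun s hs => hC _ (by linarith [hs.2]))
  -- integrability of X' on compacts within [0, ∞)
  have hmulcont : ∀ B : Matrix (Fin n) (Fin n) ℝ,
      Continuous (fun M : Matrix (Fin n) (Fin n) ℝ => B * M) := by
    intro B
    exact (LinearMap.mulLeft ℝ B).continuous_of_finiteDimensional
  have hFmeas : AEStronglyMeasurable
      (fun s => A₀ * X s + ∑ j, A j * X (s - τ j)) (volume : Measure ℝ) := by
    refine AEStronglyMeasurable.add ?_ ?_
    · exact (hmulcont A₀).comp_aestronglyMeasurable hXmeas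
    · exact Finset.aestronglyMeasurable_fun_sum _ fun j _ =>
        (hmulcont (A j)).comp_aestronglyMeasurable (hXshift (τ j))
  have hX'int : ∀ a b : ℝ, 0 ≤ a → IntegrableOn X' (Icc a b) := by
    intro a b ha
    obtain ⟨C, hC0, hC⟩ := hloc b
    have hF : IntegrableOn (fun s => A₀ * X s + ∑ j, A j * X (s - τ j)) (Icc a b) := by
      refine Integrable.mono' (integrable_const ((‖A₀‖ + ∑ j, ‖A j‖) * C)) hFmeas.restrict ?_
      refine (ae_restrict_iff' measurableSet_Icc).2 (Eventually.of_forall fun s hs => ?_)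
      calc ‖A₀ * X s + ∑ j, A j * X (s - τ j)‖
          ≤ ‖A₀ * X s‖ + ‖∑ j, A j * X (s - τ j)‖ := norm_add_le _ _
        _ ≤ ‖A₀‖ * C + ∑ j, ‖A j‖ * C := by
            gcongr
            · exact le_trans (Matrix.frobenius_norm_mul A₀ (X s))
                (by gcongr; exact hC s hs.2)
            · refine le_trans (norm_sum_le _ _) (Finset.sum_le_sum fun j _ => ?_)
              refine le_trans (Matrix.frobenius_norm_mul (A j) (X (s - τ j))) ?_
              gcongr
              exact hC _ (by linarith [hs.2, (hτ j).le])
        _ = (‖A₀‖ + ∑ j, ‖A j‖) * C := by rw [add_mul, Finset.sum_mul]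
    exact hF.congr_fun (fun s hs => (hderiv s (le_trans ha hs.1)).symm) measurableSet_Icc
  -- fundamental theorem of calculus
  have hFTC : ∀ a b : ℝ, 0 ≤ a → a ≤ b → X b - X a = ∫ s in a..b, X' s := by
    intro a b ha hab
    rw [← intervalIntegral.integral_eq_sub_of_hasDeriv_right_of_le hab
      (hcont.mono (fun x hx => le_trans ha hx.1))
      (fun x hx => (hderiv' x (lt_of_le_of_lt ha hx.1)).hasDerivWithinAt)
      (((uIcc_of_le hab).symm ▸ hX'int a b ha).intervalIntegrable)]
  -- global integral of g
  have hgint_univ : Integrable g := by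
    rw [← integrableOn_univ, ← Set.Iio_union_Ici (a := (0:ℝ))]
    refine IntegrableOn.union ?_ hint
    have : IntegrableOn (fun _ : ℝ => (0:ℝ)) (Iio 0) := integrableOn_zero
    refine this.congr_fun (fun t ht => ?_) measurableSet_Iio
    show (0:ℝ) = ‖X t‖ ^ 2
    rw [hzero t ht]; simp
  set Itot : ℝ := ∫ t, g t with hItot
  have hItot_nn : 0 ≤ Itot := integral_nonneg hgnn
  set B : ℝ := 1 + Itot / 2 with hB
  have hB1 : (1:ℝ) ≤ B := by simp [hB]; linarith
  -- window estimate
  have hXnormint : ∀ u v : ℝ, IntervalIntegrable (fun s => ‖X s‖) volume u v := by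
    intro u v
    rcases le_total u v with h | h
    · refine IntegrableOn.intervalIntegrable ?_
      rw [uIcc_of_le h]
      exact (hXint u v).norm
    · refine IntegrableOn.intervalIntegrable ?_
      rw [uIcc_of_ge h]
      exact (hXint v u).norm
  have hwin : ∀ u v : ℝ, u ≤ v → v ≤ u + 2 → (∫ s in u..v, ‖X s‖) ≤ B := by
    intro u v huv hlen
    have hrhs : IntervalIntegrable (fun s => 1/2 + g s / 2) volume u v :=
      intervalIntegrable_const.add (hgint_univ.intervalIntegrable.div_const 2)
    have h1 : (∫ s in u..v, ‖X s‖) ≤ ∫ s in u..v, (1/2 + g s / 2) := by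
      refine intervalIntegral.integral_mono_on huv (hXnormint u v) hrhs fun s _ => ?_
      have : 0 ≤ (‖X s‖ - 1)^2 := sq_nonneg _
      simp only [hgdef]
      nlinarith
    have h2 : (∫ s in u..v, (1/2 + g s / 2)) = (v - u) * (1/2) + (∫ s in u..v, g s) / 2 := by
      rw [intervalIntegral.integral_add intervalIntegrable_const
        (hgint_univ.intervalIntegrable.div_const 2)]
      congr 1
      · rw [intervalIntegral.integral_const, smul_eq_mul]
      · exact intervalIntegral.integral_div 2 g
    have h3 : (∫ s in u..v, g s) ≤ Itot := by
      rw [intervalIntegral.integral_of_le huv]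
      exact setIntegral_le_integral hgint_univ (Eventually.of_forall hgnn)
    rw [hB]
    linarith
  -- bound on X for t ≥ 2
  set SA : ℝ := ‖A₀‖ + ∑ j, ‖A j‖ with hSA
  have hSAnn : 0 ≤ SA := by
    rw [hSA]
    positivity
  set F : ℝ → ℝ := fun s => ‖A₀‖ * ‖X s‖ + ∑ j, ‖A j‖ * ‖X (s - τ j)‖ with hFdef
  have hshiftint : ∀ c u v : ℝ, IntervalIntegrable (fun s => ‖X (s - c)‖) volume u v := by
    intro c u v
    rcases le_total u v with h | h
    · refine IntegrableOn.intervalIntegrable ?_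
      rw [uIcc_of_le h]; exact (hXintshift c u v).norm
    · refine IntegrableOn.intervalIntegrable ?_
      rw [uIcc_of_ge h]; exact (hXintshift c v u).norm
  have hsumint : ∀ u v : ℝ,
      IntervalIntegrable (fun s => ∑ j, ‖A j‖ * ‖X (s - τ j)‖) volume u v := by
    intro u v
    have h2 : IntervalIntegrable (∑ j : Fin m, fun s => ‖A j‖ * ‖X (s - τ j)‖) volume u v :=
      IntervalIntegrable.sum Finset.univ fun j _ => (hshiftint (τ j) u v).const_mul (‖A j‖)
    have heq : (∑ j : Fin m, fun s => ‖A j‖ * ‖X (s - τ j)‖)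
        = fun s => ∑ j, ‖A j‖ * ‖X (s - τ j)‖ := by
      funext s; simp
    rwa [heq] at h2
  have hFint : ∀ u v : ℝ, IntervalIntegrable F volume u v := fun u v =>
    ((hXnormint u v).const_mul _).add (hsumint u v)
  have hX'norm : ∀ s : ℝ, 0 ≤ s → ‖X' s‖ ≤ F s := by
    intro s hs
    rw [hderiv s hs]
    calc ‖A₀ * X s + ∑ j, A j * X (s - τ j)‖
        ≤ ‖A₀ * X s‖ + ‖∑ j, A j * X (s - τ j)‖ := norm_add_le _ _
      _ ≤ ‖A₀ * X s‖ + ∑ j, ‖A j * X (s - τ j)‖ := by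
          gcongr
          exact norm_sum_le _ _
      _ ≤ ‖A₀‖ * ‖X s‖ + ∑ j, ‖A j‖ * ‖X (s - τ j)‖ :=
          add_le_add (Matrix.frobenius_norm_mul _ _)
            (Finset.sum_le_sum fun j _ => Matrix.frobenius_norm_mul _ _)
  have hX'normint : ∀ u v : ℝ, 0 ≤ u → u ≤ v →
      IntervalIntegrable (fun s => ‖X' s‖) volume u v := by
    intro u v hu huv
    refine IntegrableOn.intervalIntegrable ?_
    rw [uIcc_of_le huv]; exact (hX'int u v hu).norm
  have hbound2 : ∀ t : ℝ, 2 ≤ t → ‖X t‖ ≤ B + SA * B := by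
    intro t ht
    have hc0 : (0:ℝ) ≤ t - 2 := by linarith
    obtain ⟨a, haI, hamin⟩ := (isCompact_Icc (a := t-2) (b := t-1)).exists_isMinOn
      (nonempty_Icc.2 (by linarith)) ((hcont.mono (fun x hx => le_trans hc0 hx.1)).norm)
    have ha0 : 0 ≤ a := le_trans hc0 haI.1
    have hat : a ≤ t := by have := haI.2; linarith
    have hXa : ‖X a‖ ≤ B := by
      have h1 : ‖X a‖ * (t - 1 - (t - 2)) ≤ ∫ s in (t-2)..(t-1), ‖X s‖ := by
        have := intervalIntegral.integral_mono_on (by linarith : t-2 ≤ t-1)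
          (intervalIntegrable_const (c := ‖X a‖)) (hXnormint (t-2) (t-1))
          (fun x hx => (isMinOn_iff.1 hamin) x hx)
        rwa [intervalIntegral.integral_const, smul_eq_mul, mul_comm] at this
      have h2 := hwin (t-2) (t-1) (by linarith) (by linarith)
      calc ‖X a‖ = ‖X a‖ * (t - 1 - (t - 2)) := by ring_nf
        _ ≤ ∫ s in (t-2)..(t-1), ‖X s‖ := h1
        _ ≤ B := h2
    have hXt : ‖X t‖ ≤ ‖X a‖ + ∫ s in a..t, ‖X' s‖ := by
      have h2 : X t = X a + ∫ s in a..t, X' s := by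
        rw [← hFTC a t ha0 hat]; abel
      calc ‖X t‖ = ‖X a + ∫ s in a..t, X' s‖ := by rw [← h2]
        _ ≤ ‖X a‖ + ‖∫ s in a..t, X' s‖ := norm_add_le _ _
        _ ≤ ‖X a‖ + ∫ s in a..t, ‖X' s‖ := by
            gcongr
            exact intervalIntegral.norm_integral_le_integral_norm hat
    have hX'F : (∫ s in a..t, ‖X' s‖) ≤ ∫ s in a..t, F s :=
      intervalIntegral.integral_mono_on hat (hX'normint a t ha0 hat) (hFint a t)
        (fun s hs => hX'norm s (le_trans ha0 hs.1))
    have hintF : (∫ s in a..t, F s) ≤ SA * B := by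
      have heq : (∫ s in a..t, F s)
          = ‖A₀‖ * (∫ s in a..t, ‖X s‖)
            + ∑ j, ‖A j‖ * ∫ s in (a - τ j)..(t - τ j), ‖X s‖ := by
        rw [hFdef]
        rw [intervalIntegral.integral_add ((hXnormint a t).const_mul _) (hsumint a t),
          intervalIntegral.integral_const_mul, intervalIntegral.integral_finset_sum
            (fun j _ => (hshiftint (τ j) a t).const_mul (‖A j‖))]
        congr 1
        refine Finset.sum_congr rfl fun j _ => ?_
        rw [intervalIntegral.integral_const_mul,
          intervalIntegral.integral_comp_sub_right (fun s => ‖X s‖) (τ j)]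
      have hlen : t ≤ a + 2 := by have := haI.1; linarith
      rw [heq]
      calc ‖A₀‖ * (∫ s in a..t, ‖X s‖)
            + ∑ j, ‖A j‖ * ∫ s in (a - τ j)..(t - τ j), ‖X s‖
          ≤ ‖A₀‖ * B + ∑ j, ‖A j‖ * B := by
            refine add_le_add (mul_le_mul_of_nonneg_left (hwin a t hat hlen) (norm_nonneg _))
              (Finset.sum_le_sum fun j _ => mul_le_mul_of_nonneg_left
                (hwin _ _ (by linarith) (by linarith)) (norm_nonneg _))
        _ = SA * B := by rw [hSA, add_mul, Finset.sum_mul]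
    linarith
  -- global bound
  obtain ⟨C2, hC2nn, hC2⟩ := hloc 2
  set Mg : ℝ := max C2 (B + SA * B) with hMgdef
  have hMgnn : 0 ≤ Mg := le_trans hC2nn (le_max_left _ _)
  have hMg : ∀ s, ‖X s‖ ≤ Mg := by
    intro s
    rcases le_total s 2 with h | h
    · exact le_trans (hC2 s h) (le_max_left _ _)
    · exact le_trans (hbound2 s h) (le_max_right _ _)
  set L : ℝ := SA * Mg with hL
  have hLnn : 0 ≤ L := mul_nonneg hSAnn hMgnn
  have hX'b : ∀ s : ℝ, 0 ≤ s → ‖X' s‖ ≤ L := by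
    intro s hs
    refine le_trans (hX'norm s hs) ?_
    calc F s ≤ ‖A₀‖ * Mg + ∑ j, ‖A j‖ * Mg :=
        add_le_add (mul_le_mul_of_nonneg_left (hMg s) (norm_nonneg _))
          (Finset.sum_le_sum fun j _ => mul_le_mul_of_nonneg_left (hMg _) (norm_nonneg _))
      _ = L := by rw [hL, hSA, add_mul, Finset.sum_mul]
  have hXlipkey : ∀ p q : ℝ, 0 ≤ p → p ≤ q → ‖X q - X p‖ ≤ L * |q - p| := by
    intro p q hp hpq
    rw [hFTC p q hp hpq]
    refine intervalIntegral.norm_integral_le_of_norm_le_const ?_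
    intro x hx
    rw [uIoc_of_le hpq] at hx
    exact hX'b x (le_trans hp hx.1.le)
  have hXlip : ∀ p ∈ Ici (0:ℝ), ∀ q ∈ Ici (0:ℝ), ‖X q - X p‖ ≤ L * |q - p| := by
    intro p hp q hq
    rcases le_total p q with h | h
    · exact hXlipkey p q hp h
    · have := hXlipkey q p hq h
      rwa [norm_sub_rev, abs_sub_comm] at this
  set K : ℝ := 2 * Mg * L + 1 with hKdef
  have hKpos : 0 < K := by positivity
  have hglip : ∀ p ∈ Ici (0:ℝ), ∀ q ∈ Ici (0:ℝ), |g q - g p| ≤ K * |q - p| := by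
    intro p hp q hq
    have h1 : |‖X q‖ - ‖X p‖| ≤ ‖X q - X p‖ := abs_norm_sub_norm_le _ _
    have h2 := hXlip p hp q hq
    have h3 : g q - g p = (‖X q‖ - ‖X p‖) * (‖X q‖ + ‖X p‖) := by
      simp only [hgdef]; ring
    rw [h3, abs_mul]
    have h4 : |‖X q‖ + ‖X p‖| ≤ 2 * Mg := by
      rw [abs_of_nonneg (by positivity)]
      linarith [hMg p, hMg q]
    calc |‖X q‖ - ‖X p‖| * |‖X q‖ + ‖X p‖| ≤ (L * |q - p|) * (2 * Mg) :=
        mul_le_mul (le_trans h1 h2) h4 (abs_nonneg _)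
          (mul_nonneg hLnn (abs_nonneg _))
      _ ≤ K * |q - p| := by rw [hKdef]; nlinarith [abs_nonneg (q - p)]
  have htend := barbalat_aux g K hKpos hgnn hglip hint
  have hsqrt : Tendsto (fun t => Real.sqrt (g t)) atTop (𝓝 0) := by
    have h := (Real.continuous_sqrt.tendsto 0).comp htend
    simpa [Function.comp_def] using h
  refine hsqrt.congr fun t => ?_
  simp only [hgdef]
  exact Real.sqrt_sq (norm_nonneg _)
end
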